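/- arXiv:2404.08131 — 2 statements merged into one kernel-verified Lean document; each statement's English description precedes it below -/
import Mathlib

section
/- Let F = {e_1, ..., e_N} be a finite unit-norm tight frame for ℝ^d with d ≥ 3, let K ∈ ℕ and δ > 0, and let x ∈ ℝ^d satisfy ‖x‖ ≤ (K − 1/2)δ. Let p be a permutation of {1, ..., N} whose frame variation satisfies σ(F, p) ≤ 4√(d+3) N^{1 − 1/d} − 4√(d+3). Let x̄ = (d/N) Σ_{n=1}^{N} q_n e_{p(n)} be the quantized expansion of x, where q_1, ..., q_N is the quantized sequence produced by first-order ΣΔ quantization applied to the frame coefficients ⟨x, e_n⟩ with permutation p. Then ‖x − x̄‖ ≤ (δ d / (2N)) (4√(d+3) N^{1 − 1/d} − 4√(d+3) + 1). -/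
open scoped RealInnerProductSpace BigOperators

/-- The matrix 2-norm (operator norm w.r.t. Euclidean norms), i.e. the largest
singular value. -/
noncomputable def opNorm {m n : ℕ} (A : Matrix (Fin m) (Fin n) ℝ) : ℝ :=
  ‖LinearMap.toContinuousLinearMap (Matrix.toEuclideanLin A)‖

/-- The `j`-th column of a matrix, viewed as a vector of `ℝ^m` with the Euclidean norm. -/
noncomputable def matCol {m n : ℕ} (A : Matrix (Fin m) (Fin n) ℝ) (j : Fin n) :
    EuclideanSpace ℝ (Fin m) :=
  WithLp.toLp 2 (fun i => A i j)

/-- Frame variation `σ(F,p)` of the ordered family `v = e ∘ p`: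
`∑_{i=1}^{N-1} ‖v i - v (i+1)‖`. -/
noncomputable def frameVar {E : Type*} [NormedAddCommGroup E] :
    {N : ℕ} → (Fin N → E) → ℝ
  | 0, _ => 0
  | n + 1, v => ∑ i : Fin n, ‖v i.castSucc - v i.succ‖

/-- The midrise quantization alphabet `A^δ_K`. -/
def midrise (δ : ℝ) (K : ℕ) : Set ℝ :=
  {a | ∃ j : Fin (2 * K), a = (-(K : ℝ) + 1 / 2 + (j : ℕ)) * δ}

/-- Componentwise application of a scalar function to a Euclidean vector. -/
noncomputable def cwMap (σ : ℝ → ℝ) {d : ℕ} (v : EuclideanSpace ℝ (Fin d)) :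
    EuclideanSpace ℝ (Fin d) :=
  WithLp.toLp 2 (fun j => σ (v j))

/-- `layerSeq σ m W X i` is the activated output after `i` layers:
`z_0 = X`, `z_{i+1} = σ.(W_i z_i)`. -/
noncomputable def layerSeq (σ : ℝ → ℝ) (m : ℕ → ℕ)
    (W : (i : ℕ) → Matrix (Fin (m (i + 1))) (Fin (m i)) ℝ)
    (X : EuclideanSpace ℝ (Fin (m 0))) : (i : ℕ) → EuclideanSpace ℝ (Fin (m i))
  | 0 => X
  | i + 1 => cwMap σ (Matrix.toEuclideanLin (W i) (layerSeq σ m W X i))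

/-- The `n`-layer feed-forward network `W_n σ(W_{n-1} σ(⋯ σ(W_1 X)⋯))`
(no activation after the last layer, no biases). -/
noncomputable def net (σ : ℝ → ℝ) (m : ℕ → ℕ)
    (W : (i : ℕ) → Matrix (Fin (m (i + 1))) (Fin (m i)) ℝ)
    (n : ℕ) (X : EuclideanSpace ℝ (Fin (m 0))) : EuclideanSpace ℝ (Fin (m n)) :=
  match n with
  | 0 => X
  | k + 1 => Matrix.toEuclideanLin (W k) (layerSeq σ m W X k)

/-- Componentwise ReLU. -/
noncomputable def relu {d : ℕ} (v : EuclideanSpace ℝ (Fin d)) : EuclideanSpace ℝ (Fin d) :=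
  cwMap (fun t => max 0 t) v

/-- A residual block `z(x) = W₂ σ(W₁ x) + x` with ReLU activation `σ`. -/
noncomputable def resBlock {k : ℕ} (W1 W2 : Matrix (Fin k) (Fin k) ℝ)
    (x : EuclideanSpace ℝ (Fin k)) : EuclideanSpace ℝ (Fin k) :=
  Matrix.toEuclideanLin W2 (relu (Matrix.toEuclideanLin W1 x)) + x

/-- Partial compositions of a residual network:
`y_0 = X`, `y_i = z^{[i]} ∘ σ ∘ ⋯ ∘ σ ∘ z^{[1]} (X)`, where block `i` (1-based)
uses matrices `W1 (i-1)`, `W2 (i-1)`. -/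
noncomputable def resPartial {k : ℕ} (W1 W2 : ℕ → Matrix (Fin k) (Fin k) ℝ)
    (X : EuclideanSpace ℝ (Fin k)) : ℕ → EuclideanSpace ℝ (Fin k)
  | 0 => X
  | 1 => resBlock (W1 0) (W2 0) X
  | i + 2 => resBlock (W1 (i + 1)) (W2 (i + 1)) (relu (resPartial W1 W2 X (i + 1)))


lemma midrise_near (δ : ℝ) (hδ : 0 < δ) (K : ℕ) (hK : 0 < K) (v : ℝ)
    (hv : |v| ≤ K * δ) : ∃ a ∈ midrise δ K, |v - a| ≤ δ / 2 := by
  obtain ⟨w, hwdef⟩ : ∃ w : ℝ, w = v / δ + K := ⟨_, rfl⟩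
  have hw0 : 0 ≤ w := by
    have h1 : -((K : ℝ) * δ) ≤ v := (abs_le.mp hv).1
    have h2 : -(K : ℝ) ≤ v / δ := by
      rw [le_div_iff₀ hδ]; linarith
    rw [hwdef]; linarith
  have hw2 : w ≤ 2 * K := by
    have h1 : v ≤ (K : ℝ) * δ := (abs_le.mp hv).2
    have h2 : v / δ ≤ (K : ℝ) := by
      rw [div_le_iff₀ hδ]; linarith
    rw [hwdef]; linarith
  obtain ⟨j, hjdef⟩ : ∃ j : ℕ, j = min (⌊w⌋₊) (2 * K - 1) := ⟨_, rfl⟩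
  have hjlt : j < 2 * K := by omega
  have hjw : (j : ℝ) ≤ w := by
    have h1 : (j : ℝ) ≤ (⌊w⌋₊ : ℝ) := by exact_mod_cast Nat.cast_le.mpr (hjdef ▸ min_le_left _ _)
    exact h1.trans (Nat.floor_le hw0)
  have hwj : w ≤ (j : ℝ) + 1 := by
    rcases le_or_gt (⌊w⌋₊) (2 * K - 1) with h | h
    · have hj' : j = ⌊w⌋₊ := hjdef.trans (min_eq_left h)
      have := Nat.lt_floor_add_one w
      rw [hj']
      exact_mod_cast this.le
    · have hj' : j = 2 * K - 1 := hjdef.trans (min_eq_right (by omega))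
      have : ((j : ℝ) + 1) = (2 * K : ℕ) := by
        rw [hj']; push_cast [Nat.cast_sub (by omega : 1 ≤ 2 * K)]; ring
      rw [this]; exact_mod_cast hw2
  refine ⟨(-(K : ℝ) + 1 / 2 + (j : ℕ)) * δ, ⟨⟨j, hjlt⟩, rfl⟩, ?_⟩
  have hv' : v = (w - K) * δ := by
    have h : w - K = v / δ := by rw [hwdef]; ring
    rw [h, div_mul_cancel₀ _ (ne_of_gt hδ)]
  have heq : v - (-(K : ℝ) + 1 / 2 + (j : ℕ)) * δ = (w - (j : ℝ) - 1 / 2) * δ := by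
    rw [hv']; ring
  rw [heq, abs_mul, abs_of_pos hδ]
  have habs : |w - (j : ℝ) - 1 / 2| ≤ 1 / 2 :=
    abs_le.mpr ⟨by linarith, by linarith⟩
  nlinarith

lemma abel_sum {E : Type*} [AddCommGroup E] [Module ℝ E] (U : ℕ → ℝ) (V : ℕ → E)
    (hU0 : U 0 = 0) (M : ℕ) :
    ∑ n ∈ Finset.range (M + 1), (U (n + 1) - U n) • V n
      = (∑ n ∈ Finset.range M, U (n + 1) • (V n - V (n + 1))) + U (M + 1) • V M := by
  induction M with
  | zero => simp [hU0]
  | succ m ih =>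
      rw [Finset.sum_range_succ, ih, Finset.sum_range_succ]
      simp only [smul_sub, sub_smul]
      abel

set_option maxHeartbeats 2000000 in
/-- first-order ΣΔ quantization error for a FUNTF, using a
permutation of small frame variation. -/
theorem stmt3 {d N : ℕ} (hd : 3 ≤ d) (hN : 0 < N)
    (e : Fin N → EuclideanSpace ℝ (Fin d))
    (hunit : ∀ i, ‖e i‖ = 1)
    (htight : ∀ x : EuclideanSpace ℝ (Fin d),
      ∑ i, ⟪x, e i⟫ ^ 2 = ((N : ℝ) / d) * ‖x‖ ^ 2)
    (p : Equiv.Perm (Fin N)) (K : ℕ) (δ : ℝ) (hδ : 0 < δ)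
    (hvar : frameVar (fun i => e (p i)) ≤
      4 * Real.sqrt ((d : ℝ) + 3) * (N : ℝ) ^ (1 - 1 / (d : ℝ)) -
        4 * Real.sqrt ((d : ℝ) + 3))
    (x : EuclideanSpace ℝ (Fin d)) (hx : ‖x‖ ≤ ((K : ℝ) - 1 / 2) * δ)
    (u : Fin (N + 1) → ℝ) (q : Fin N → ℝ)
    (hu0 : u 0 = 0)
    (hmem : ∀ n : Fin N, q n ∈ midrise δ K)
    (hmin : ∀ n : Fin N, ∀ a ∈ midrise δ K,
      |u n.castSucc + ⟪x, e (p n)⟫ - q n| ≤ |u n.castSucc + ⟪x, e (p n)⟫ - a|)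
    (hrec : ∀ n : Fin N, u n.succ = u n.castSucc + ⟪x, e (p n)⟫ - q n) :
    ‖x - ((d : ℝ) / N) • ∑ n, q n • e (p n)‖ ≤
      δ * d / (2 * N) * (4 * Real.sqrt ((d : ℝ) + 3) * (N : ℝ) ^ (1 - 1 / (d : ℝ)) -
        4 * Real.sqrt ((d : ℝ) + 3) + 1) := by
  -- K must be positive, otherwise the alphabet is empty
  have hK : 0 < K := by
    by_contra h
    obtain ⟨j, -⟩ := hmem ⟨0, hN⟩
    have := j.isLt
    omega
  have hd0 : (0 : ℝ) < d := by exact_mod_cast lt_of_lt_of_le (by norm_num) hd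
  have hN0 : (0 : ℝ) < N := by exact_mod_cast hN
  -- stability: |u n| ≤ δ/2
  have hstab : ∀ n : Fin (N + 1), |u n| ≤ δ / 2 := by
    have key : ∀ k, ∀ hk : k < N + 1, |u ⟨k, hk⟩| ≤ δ / 2 := by
      intro k
      induction k with
      | zero =>
          intro hk
          have : (⟨0, hk⟩ : Fin (N + 1)) = 0 := rfl
          rw [this, hu0, abs_zero]
          positivity
      | succ m ih =>
          intro hk
          have hm : m < N := by omega
          set n : Fin N := ⟨m, hm⟩ with hn
          have h1 : |u n.castSucc| ≤ δ / 2 := ih (by omega)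
          have hc : |⟪x, e (p n)⟫| ≤ ((K : ℝ) - 1 / 2) * δ := by
            calc |⟪x, e (p n)⟫| ≤ ‖x‖ * ‖e (p n)‖ := abs_real_inner_le_norm _ _
              _ = ‖x‖ := by rw [hunit, mul_one]
              _ ≤ _ := hx
          have hv : |u n.castSucc + ⟪x, e (p n)⟫| ≤ K * δ := by
            have h2 := abs_add_le (u n.castSucc) ⟪x, e (p n)⟫
            have h3 : (K : ℝ) * δ = δ / 2 + ((K : ℝ) - 1 / 2) * δ := by ring
            linarith
          obtain ⟨a, ha, hna⟩ := midrise_near δ hδ K hK _ hv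
          have h4 : |u n.castSucc + ⟪x, e (p n)⟫ - q n| ≤ δ / 2 :=
            le_trans (hmin n a ha) hna
          have h5 : (⟨m + 1, hk⟩ : Fin (N + 1)) = n.succ := rfl
          rw [h5, hrec n]
          exact h4
    intro n
    have := key n.val n.isLt
    simpa using this
  -- polarization: ∑ ⟪x,eᵢ⟫⟪y,eᵢ⟫ = (N/d)⟪x,y⟫
  have hpol : ∀ y z : EuclideanSpace ℝ (Fin d),
      ∑ i, ⟪y, e i⟫ * ⟪z, e i⟫ = ((N : ℝ) / d) * ⟪y, z⟫ := by
    intro y z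
    have h1 := htight (y + z)
    have h2 := htight y
    have h3 := htight z
    have hn : ‖y + z‖ ^ 2 = ‖y‖ ^ 2 + 2 * ⟪y, z⟫ + ‖z‖ ^ 2 := norm_add_sq_real y z
    have hexp : ∑ i, ⟪y + z, e i⟫ ^ 2
        = ∑ i, ⟪y, e i⟫ ^ 2 + 2 * ∑ i, ⟪y, e i⟫ * ⟪z, e i⟫ + ∑ i, ⟪z, e i⟫ ^ 2 := by
      rw [Finset.mul_sum, ← Finset.sum_add_distrib, ← Finset.sum_add_distrib]
      refine Finset.sum_congr rfl fun i _ => ?_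
      rw [inner_add_left]
      ring
    rw [hexp, hn] at h1
    nlinarith [h1, h2, h3]
  -- frame reconstruction
  have hrecon : x = ((d : ℝ) / N) • ∑ i, ⟪x, e i⟫ • e i := by
    apply ext_inner_right ℝ
    intro y
    rw [real_inner_smul_left, sum_inner]
    have : ∑ i, ⟪⟪x, e i⟫ • e i, y⟫ = ∑ i, ⟪x, e i⟫ * ⟪y, e i⟫ := by
      refine Finset.sum_congr rfl fun i _ => ?_
      rw [real_inner_smul_left, real_inner_comm (e i) y]
    rw [this, hpol x y]
    field_simp
  -- error vector identity
  have key : ((d : ℝ) / N) • ∑ n, (⟪x, e (p n)⟫ - q n) • e (p n)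
      = x - ((d : ℝ) / N) • ∑ n, q n • e (p n) := by
    have hsplit : (∑ n, (⟪x, e (p n)⟫ - q n) • e (p n))
        = (∑ n, ⟪x, e (p n)⟫ • e (p n)) - ∑ n, q n • e (p n) := by
      rw [← Finset.sum_sub_distrib]
      refine Finset.sum_congr rfl fun n _ => ?_
      rw [sub_smul]
    rw [hsplit, smul_sub,
      Equiv.sum_comp p (fun i => ⟪x, e i⟫ • e i), ← hrecon]
  -- set up ℕ-indexed sequences
  obtain ⟨M, rfl⟩ : ∃ M, N = M + 1 := ⟨N - 1, by omega⟩
  obtain ⟨V, hVdef⟩ : ∃ V : ℕ → EuclideanSpace ℝ (Fin d),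
      V = fun n => if h : n < M + 1 then e (p ⟨n, h⟩) else 0 := ⟨_, rfl⟩
  obtain ⟨U, hUdef⟩ : ∃ U : ℕ → ℝ,
      U = fun n => if h : n < M + 2 then u ⟨n, h⟩ else 0 := ⟨_, rfl⟩
  have hU0 : U 0 = 0 := by simp only [hUdef]; rw [dif_pos (by omega : 0 < M + 2)]; exact hu0
  have hUb : ∀ n, |U n| ≤ δ / 2 := by
    intro n
    simp only [hUdef]
    split
    · exact hstab _
    · rw [abs_zero]; positivity
  obtain ⟨S, hSdef⟩ : ∃ S : EuclideanSpace ℝ (Fin d),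
      S = ∑ n, (⟪x, e (p n)⟫ - q n) • e (p n) := ⟨_, rfl⟩
  rw [← hSdef] at key
  have hS : S = ∑ n ∈ Finset.range (M + 1), (U (n + 1) - U n) • V n := by
    rw [hSdef, ← Fin.sum_univ_eq_sum_range (fun n => (U (n + 1) - U n) • V n) (M + 1)]
    refine Finset.sum_congr rfl fun n _ => ?_
    have hU1 : U (n.val + 1) = u n.succ := by
      simp only [hUdef]
      rw [dif_pos (by omega : n.val + 1 < M + 2)]
      rfl
    have hU2 : U n.val = u n.castSucc := by
      simp only [hUdef]
      rw [dif_pos (by omega : n.val < M + 2)]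
      rfl
    have hV1 : V n.val = e (p n) := by
      simp only [hVdef]
      rw [dif_pos n.isLt]
    rw [hU1, hU2, hV1, hrec n]
    ring_nf
  have habel := abel_sum U V hU0 M
  have hVM : ‖V M‖ = 1 := by
    simp only [hVdef]; rw [dif_pos (by omega : M < M + 1)]; exact hunit _
  have hfv : frameVar (fun i => e (p i)) = ∑ n ∈ Finset.range M, ‖V n - V (n + 1)‖ := by
    have h0 : frameVar (fun i => e (p i))
        = ∑ i : Fin M, ‖e (p (⟨i.val, by omega⟩ : Fin (M + 1))) -
            e (p (⟨i.val + 1, by omega⟩ : Fin (M + 1)))‖ := rfl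
    rw [h0, ← Fin.sum_univ_eq_sum_range (fun n => ‖V n - V (n + 1)‖) M]
    refine Finset.sum_congr rfl fun i _ => ?_
    have hV1 : V i.val = e (p ⟨i.val, by omega⟩) := by
      simp only [hVdef]; rw [dif_pos (by omega : i.val < M + 1)]
    have hV2 : V (i.val + 1) = e (p ⟨i.val + 1, by omega⟩) := by
      simp only [hVdef]; rw [dif_pos (by omega : i.val + 1 < M + 1)]
    rw [hV1, hV2]
  have hnormS : ‖S‖ ≤ δ / 2 * (frameVar (fun i => e (p i)) + 1) := by
    rw [hS, habel]
    calc ‖(∑ n ∈ Finset.range M, U (n + 1) • (V n - V (n + 1))) + U (M + 1) • V M‖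
        ≤ ‖∑ n ∈ Finset.range M, U (n + 1) • (V n - V (n + 1))‖ + ‖U (M + 1) • V M‖ :=
          norm_add_le _ _
      _ ≤ (∑ n ∈ Finset.range M, ‖U (n + 1) • (V n - V (n + 1))‖) + ‖U (M + 1) • V M‖ := by
          gcongr
          exact norm_sum_le _ _
      _ ≤ (∑ n ∈ Finset.range M, δ / 2 * ‖V n - V (n + 1)‖) + δ / 2 * 1 := by
          refine add_le_add (Finset.sum_le_sum fun n _ => ?_) ?_
          · rw [norm_smul, Real.norm_eq_abs]
            exact mul_le_mul_of_nonneg_right (hUb _) (norm_nonneg _)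
          · rw [norm_smul, Real.norm_eq_abs, hVM, mul_one, mul_one]
            exact hUb _
      _ = δ / 2 * (frameVar (fun i => e (p i)) + 1) := by
          rw [hfv, ← Finset.mul_sum]; ring
  -- finish
  rw [← key]
  rw [norm_smul, Real.norm_eq_abs, abs_of_pos (show (0 : ℝ) < (d : ℝ) / ((M + 1 : ℕ) : ℝ) by positivity)]
  have hstep : ‖S‖ ≤ δ / 2 * ((4 * Real.sqrt ((d : ℝ) + 3) * ((M + 1 : ℕ) : ℝ) ^
      (1 - 1 / (d : ℝ)) - 4 * Real.sqrt ((d : ℝ) + 3)) + 1) := by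
    refine hnormS.trans ?_
    have := hvar
    nlinarith [hδ.le]
  calc (d : ℝ) / ((M + 1 : ℕ) : ℝ) * ‖S‖
      ≤ (d : ℝ) / ((M + 1 : ℕ) : ℝ) * (δ / 2 * ((4 * Real.sqrt ((d : ℝ) + 3) *
          ((M + 1 : ℕ) : ℝ) ^ (1 - 1 / (d : ℝ)) - 4 * Real.sqrt ((d : ℝ) + 3)) + 1)) := by
        exact mul_le_mul_of_nonneg_left hstep (by positivity)
    _ = δ * d / (2 * ((M + 1 : ℕ) : ℝ)) * (4 * Real.sqrt ((d : ℝ) + 3) *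
          ((M + 1 : ℕ) : ℝ) ^ (1 - 1 / (d : ℝ)) - 4 * Real.sqrt ((d : ℝ) + 3) + 1) := by
        generalize ((M + 1 : ℕ) : ℝ) ^ (1 - 1 / (d : ℝ)) = t
        generalize Real.sqrt ((d : ℝ) + 3) = s
        ring
end

section
/- Let f(x) = W_n σ(W_{n−1} σ(··· σ(W_1 x) ···)) be a feed-forward neural network with n layers whose hidden widths are equal: m_1 = m_2 = ··· = m_{n−1} = m with m ≥ 3, m_0 ≥ 3, m_n ≥ 3, with weight matrices W_l ∈ ℝ^{m_l × m_{l−1}} and σ_i = ‖W_i‖, and activation σ that is L-Lipschitz with σ(0) = 0 componentwise (no activation after the last layer, no biases). Let M = max{m_0, m, m_n}, let δ > 0 and N ∈ ℕ, and suppose Q_1, ..., Q_n satisfy ‖W_j − Q_j‖ ≤ 2√2 δ M² N^{−1/m} for all j (as holds when W_1, ..., W_{n−1} and W_n^T are quantized by first-order ΣΔ against a fixed finite unit-norm tight frame for ℝ^m with N elements, step size δ, and a permutation whose frame variation is ≤ 4√(m+3) N^{1 − 1/m} − 4√(m+3)). Then for every X ∈ ℝ^{m_0}, ‖f(X) − f_Q(X)‖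 ≤ 2√2 δ M² N^{−1/m} L^{n−1} ‖X‖ · Σ_{j=1}^{n} [ ∏_{i=j+1}^{n} σ_i · ∏_{l=1}^{j−1} (2√2 δ M² N^{−1/m} + σ_l) ]. -/
open scoped RealInnerProductSpace BigOperators

lemma opNorm_apply_le' {m n : ℕ} (A : Matrix (Fin m) (Fin n) ℝ)
    (v : EuclideanSpace ℝ (Fin n)) :
    ‖Matrix.toEuclideanLin A v‖ ≤ opNorm A * ‖v‖ :=
  (LinearMap.toContinuousLinearMap (Matrix.toEuclideanLin A)).le_opNorm v

lemma opNorm_le_add' {m n : ℕ} (A B : Matrix (Fin m) (Fin n) ℝ) :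
    opNorm A ≤ opNorm B + opNorm (B - A) := by
  have h : LinearMap.toContinuousLinearMap (Matrix.toEuclideanLin A)
      = LinearMap.toContinuousLinearMap (Matrix.toEuclideanLin B)
        - LinearMap.toContinuousLinearMap (Matrix.toEuclideanLin (B - A)) := by
    rw [map_sub, map_sub]; abel
  unfold opNorm
  rw [h]
  exact norm_sub_le _ _

lemma cw_lip' {L : ℝ} {σ : ℝ → ℝ} (hσ : ∀ a b : ℝ, |σ a - σ b| ≤ L * |a - b|)
    {d : ℕ} (u v : EuclideanSpace ℝ (Fin d)) :
    ‖cwMap σ u - cwMap σ v‖ ≤ L * ‖u - v‖ := by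
  have hL : 0 ≤ L := by
    have h1 := hσ 1 0
    have h2 : (0:ℝ) ≤ L * |1 - 0| := le_trans (abs_nonneg _) h1
    simpa using h2
  rw [EuclideanSpace.norm_eq, EuclideanSpace.norm_eq]
  rw [show L = Real.sqrt (L ^ 2) from (Real.sqrt_sq hL).symm]
  rw [← Real.sqrt_mul (by positivity)]
  apply Real.sqrt_le_sqrt
  rw [Finset.mul_sum]
  apply Finset.sum_le_sum
  intro i _
  have h1 : ‖(cwMap σ u - cwMap σ v) i‖ = |σ (u i) - σ (v i)| := by
    simp [cwMap, Real.norm_eq_abs]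
  have h2 : ‖(u - v) i‖ = |u i - v i| := rfl
  rw [h1, h2]
  calc |σ (u i) - σ (v i)| ^ 2 ≤ (L * |u i - v i|) ^ 2 :=
        pow_le_pow_left₀ (abs_nonneg _) (hσ (u i) (v i)) 2
    _ = L ^ 2 * |u i - v i| ^ 2 := by ring

lemma cw_norm_le' {L : ℝ} {σ : ℝ → ℝ} (hσ : ∀ a b : ℝ, |σ a - σ b| ≤ L * |a - b|)
    (hσ0 : σ 0 = 0) {d : ℕ} (u : EuclideanSpace ℝ (Fin d)) :
    ‖cwMap σ u‖ ≤ L * ‖u‖ := by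
  have h0 : cwMap σ (0 : EuclideanSpace ℝ (Fin d)) = 0 := by
    ext j
    show σ 0 = 0
    exact hσ0
  have h := cw_lip' hσ u 0
  simpa [h0] using h

/-- (Corollary 5.4: equal hidden widths. The network has `n+1`
layers indexed `0, …, n`, with dimensions `md 0, md 1, …, md (n+1)`; the hidden
dimensions `md 1 = ⋯ = md n = mh`. The paper's `L^{n-1}` is `L^n`.) -/
theorem stmt8 (L : ℝ) (σ : ℝ → ℝ)
    (hσ : ∀ a b : ℝ, |σ a - σ b| ≤ L * |a - b|) (hσ0 : σ 0 = 0)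
    (n : ℕ) (md : ℕ → ℕ) (mh : ℕ)
    (hmh : 3 ≤ mh) (h0 : 3 ≤ md 0) (hlast : 3 ≤ md (n + 1))
    (hhid : ∀ i, 1 ≤ i → i ≤ n → md i = mh)
    (W Q : (i : ℕ) → Matrix (Fin (md (i + 1))) (Fin (md i)) ℝ)
    (δ : ℝ) (hδ : 0 < δ) (N : ℕ) (hN : 0 < N)
    (M : ℕ) (hM : M = max (md 0) (max mh (md (n + 1))))
    (hQ : ∀ j ≤ n, opNorm (W j - Q j) ≤
      2 * Real.sqrt 2 * δ * (M : ℝ) ^ 2 * (N : ℝ) ^ (-(1 / (mh : ℝ))))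
    (X : EuclideanSpace ℝ (Fin (md 0))) :
    ‖net σ md W (n + 1) X - net σ md Q (n + 1) X‖ ≤
      2 * Real.sqrt 2 * δ * (M : ℝ) ^ 2 * (N : ℝ) ^ (-(1 / (mh : ℝ))) * L ^ n * ‖X‖ *
        ∑ j ∈ Finset.range (n + 1),
          (∏ i ∈ Finset.Ico (j + 1) (n + 1), opNorm (W i)) *
            (∏ l ∈ Finset.range j,
              (2 * Real.sqrt 2 * δ * (M : ℝ) ^ 2 * (N : ℝ) ^ (-(1 / (mh : ℝ))) + opNorm (W l))) := by
  have hL : 0 ≤ L := by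
    have h1 := hσ 1 0
    have h2 : (0:ℝ) ≤ L * |1 - 0| := le_trans (abs_nonneg _) h1
    simpa using h2
  set ε := 2 * Real.sqrt 2 * δ * (M : ℝ) ^ 2 * (N : ℝ) ^ (-(1 / (mh : ℝ))) with hεdef
  have hε : 0 ≤ ε := by rw [hεdef]; positivity
  have hWnn : ∀ i : ℕ, 0 ≤ opNorm (W i) := fun i => norm_nonneg _
  -- recurrence for the sum
  have hS : ∀ i : ℕ,
      (∑ j ∈ Finset.range (i + 1),
        (∏ l ∈ Finset.Ico (j + 1) (i + 1), opNorm (W l)) *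
          (∏ l ∈ Finset.range j, (ε + opNorm (W l))))
      = opNorm (W i) * (∑ j ∈ Finset.range i,
          (∏ l ∈ Finset.Ico (j + 1) i, opNorm (W l)) *
            (∏ l ∈ Finset.range j, (ε + opNorm (W l))))
        + ∏ l ∈ Finset.range i, (ε + opNorm (W l)) := by
    intro i
    rw [Finset.sum_range_succ, Finset.Ico_self, Finset.prod_empty, one_mul, Finset.mul_sum]
    congr 1
    apply Finset.sum_congr rfl
    intro j hj
    rw [Finset.prod_Ico_succ_top (Nat.succ_le_of_lt (Finset.mem_range.mp hj))]
    ring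
  have key : ∀ i : ℕ, i ≤ n →
      ‖layerSeq σ md Q X i‖ ≤ L ^ i * (∏ l ∈ Finset.range i, (ε + opNorm (W l))) * ‖X‖ ∧
      ‖layerSeq σ md W X i - layerSeq σ md Q X i‖ ≤
        ε * L ^ i * ‖X‖ * ∑ j ∈ Finset.range i,
          (∏ l ∈ Finset.Ico (j + 1) i, opNorm (W l)) *
            (∏ l ∈ Finset.range j, (ε + opNorm (W l))) := by
    intro i
    induction i with
    | zero =>
      intro _
      constructor
      · simp [layerSeq]
      · simp [layerSeq]
    | succ i ih =>
      intro hi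
      have hi' : i ≤ n := Nat.le_of_succ_le hi
      obtain ⟨ihQ, ihD⟩ := ih hi'
      have hQop : opNorm (Q i) ≤ ε + opNorm (W i) := by
        have h1 := opNorm_le_add' (Q i) (W i)
        have h2 := hQ i hi'
        linarith
      have eW : layerSeq σ md W X (i + 1)
          = cwMap σ (Matrix.toEuclideanLin (W i) (layerSeq σ md W X i)) := rfl
      have eQ : layerSeq σ md Q X (i + 1)
          = cwMap σ (Matrix.toEuclideanLin (Q i) (layerSeq σ md Q X i)) := rfl
      constructor
      · rw [eQ]
        calc ‖cwMap σ (Matrix.toEuclideanLin (Q i) (layerSeq σ md Q X i))‖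
            ≤ L * ‖Matrix.toEuclideanLin (Q i) (layerSeq σ md Q X i)‖ :=
              cw_norm_le' hσ hσ0 _
          _ ≤ L * ((ε + opNorm (W i)) *
                (L ^ i * (∏ l ∈ Finset.range i, (ε + opNorm (W l))) * ‖X‖)) := by
              apply mul_le_mul_of_nonneg_left _ hL
              calc ‖Matrix.toEuclideanLin (Q i) (layerSeq σ md Q X i)‖
                  ≤ opNorm (Q i) * ‖layerSeq σ md Q X i‖ := opNorm_apply_le' _ _
                _ ≤ (ε + opNorm (W i)) *
                    (L ^ i * (∏ l ∈ Finset.range i, (ε + opNorm (W l))) * ‖X‖) :=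
                    mul_le_mul hQop ihQ (norm_nonneg _) (add_nonneg hε (hWnn i))
          _ = L ^ (i + 1) * (∏ l ∈ Finset.range (i + 1), (ε + opNorm (W l))) * ‖X‖ := by
              rw [Finset.prod_range_succ, pow_succ]; ring
      · rw [eW, eQ]
        have d2 : Matrix.toEuclideanLin (W i) (layerSeq σ md W X i)
            - Matrix.toEuclideanLin (Q i) (layerSeq σ md Q X i)
            = Matrix.toEuclideanLin (W i) (layerSeq σ md W X i - layerSeq σ md Q X i)
              + Matrix.toEuclideanLin (W i - Q i) (layerSeq σ md Q X i) := by
          rw [map_sub, map_sub, LinearMap.sub_apply]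
          abel
        calc ‖cwMap σ (Matrix.toEuclideanLin (W i) (layerSeq σ md W X i))
              - cwMap σ (Matrix.toEuclideanLin (Q i) (layerSeq σ md Q X i))‖
            ≤ L * ‖Matrix.toEuclideanLin (W i) (layerSeq σ md W X i)
                - Matrix.toEuclideanLin (Q i) (layerSeq σ md Q X i)‖ := cw_lip' hσ _ _
          _ = L * ‖Matrix.toEuclideanLin (W i) (layerSeq σ md W X i - layerSeq σ md Q X i)
                + Matrix.toEuclideanLin (W i - Q i) (layerSeq σ md Q X i)‖ := by rw [d2]
          _ ≤ L * (‖Matrix.toEuclideanLin (W i) (layerSeq σ md W X i - layerSeq σ md Q X i)‖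
                + ‖Matrix.toEuclideanLin (W i - Q i) (layerSeq σ md Q X i)‖) :=
              mul_le_mul_of_nonneg_left (norm_add_le _ _) hL
          _ ≤ L * (opNorm (W i) * ‖layerSeq σ md W X i - layerSeq σ md Q X i‖
                + opNorm (W i - Q i) * ‖layerSeq σ md Q X i‖) :=
              mul_le_mul_of_nonneg_left
                (add_le_add (opNorm_apply_le' _ _) (opNorm_apply_le' _ _)) hL
          _ ≤ L * (opNorm (W i) * (ε * L ^ i * ‖X‖ * ∑ j ∈ Finset.range i,
                  (∏ l ∈ Finset.Ico (j + 1) i, opNorm (W l)) *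
                    (∏ l ∈ Finset.range j, (ε + opNorm (W l))))
                + ε * (L ^ i * (∏ l ∈ Finset.range i, (ε + opNorm (W l))) * ‖X‖)) := by
              apply mul_le_mul_of_nonneg_left _ hL
              exact add_le_add
                (mul_le_mul_of_nonneg_left ihD (hWnn i))
                (mul_le_mul (hQ i hi') ihQ (norm_nonneg _) hε)
          _ = ε * L ^ (i + 1) * ‖X‖ * ∑ j ∈ Finset.range (i + 1),
                (∏ l ∈ Finset.Ico (j + 1) (i + 1), opNorm (W l)) *
                  (∏ l ∈ Finset.range j, (ε + opNorm (W l))) := by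
              rw [hS i, pow_succ]; ring
  obtain ⟨hQn, hDn⟩ := key n le_rfl
  have eW : net σ md W (n + 1) X
      = Matrix.toEuclideanLin (W n) (layerSeq σ md W X n) := rfl
  have eQ : net σ md Q (n + 1) X
      = Matrix.toEuclideanLin (Q n) (layerSeq σ md Q X n) := rfl
  rw [eW, eQ]
  have d2 : Matrix.toEuclideanLin (W n) (layerSeq σ md W X n)
      - Matrix.toEuclideanLin (Q n) (layerSeq σ md Q X n)
      = Matrix.toEuclideanLin (W n) (layerSeq σ md W X n - layerSeq σ md Q X n)
        + Matrix.toEuclideanLin (W n - Q n) (layerSeq σ md Q X n) := by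
    rw [map_sub, map_sub, LinearMap.sub_apply]
    abel
  calc ‖Matrix.toEuclideanLin (W n) (layerSeq σ md W X n)
        - Matrix.toEuclideanLin (Q n) (layerSeq σ md Q X n)‖
      = ‖Matrix.toEuclideanLin (W n) (layerSeq σ md W X n - layerSeq σ md Q X n)
        + Matrix.toEuclideanLin (W n - Q n) (layerSeq σ md Q X n)‖ := by rw [d2]
    _ ≤ ‖Matrix.toEuclideanLin (W n) (layerSeq σ md W X n - layerSeq σ md Q X n)‖
        + ‖Matrix.toEuclideanLin (W n - Q n) (layerSeq σ md Q X n)‖ := norm_add_le _ _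
    _ ≤ opNorm (W n) * ‖layerSeq σ md W X n - layerSeq σ md Q X n‖
        + opNorm (W n - Q n) * ‖layerSeq σ md Q X n‖ :=
        add_le_add (opNorm_apply_le' _ _) (opNorm_apply_le' _ _)
    _ ≤ opNorm (W n) * (ε * L ^ n * ‖X‖ * ∑ j ∈ Finset.range n,
            (∏ l ∈ Finset.Ico (j + 1) n, opNorm (W l)) *
              (∏ l ∈ Finset.range j, (ε + opNorm (W l))))
        + ε * (L ^ n * (∏ l ∈ Finset.range n, (ε + opNorm (W l))) * ‖X‖) :=
        add_le_add
          (mul_le_mul_of_nonneg_left hDn (hWnn n))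
          (mul_le_mul (hQ n le_rfl) hQn (norm_nonneg _) hε)
    _ = ε * L ^ n * ‖X‖ * ∑ j ∈ Finset.range (n + 1),
          (∏ i ∈ Finset.Ico (j + 1) (n + 1), opNorm (W i)) *
            (∏ l ∈ Finset.range j, (ε + opNorm (W l))) := by
        rw [hS n]; ring
end
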